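/- Let ν ∈ ℝ, a > 0, m ∈ ℕ, λ = (ν + 2m)/a with λ > -1, and let f_l(r) = (2^{λ+1} l! / (a^λ Γ(λ + l + 1)))^{1/2} r^m L_l^{(λ)}((2/a) r^a) e^{-(1/a) r^a} (with the convention f_{-1} = 0). Then for every l ∈ ℕ and r > 0, -(i/2)( ((ν + a)/a) f_l(r) + (2/a) r f_l'(r) ) - (i/(2a)) r^a f_l(r) - (i/(2a)) r^{-a}( r² f_l''(r) + (ν + 1) r f_l'(r) - m(ν + m) f_l(r) ) = i √(l(λ + l)) · f_{l-1}(r); that is, the lowering operator π(𝐧⁻) = -(i/2) H_a - (1/2) E⁺_a - (1/2) E⁻_{a,m} sends f_l to i √(l(λ+l)) f_{l-1}. -/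

import Mathlib

open Real Complex

/-- The generalized Laguerre polynomial
`L_l^{(λ)}(t) = ∑_{j=0}^{l} ((-1)^j / (j!(l-j)!)) (Γ(λ+l+1)/Γ(λ+j+1)) t^j`. -/
noncomputable def laguerre (lam : ℝ) (l : ℕ) (t : ℝ) : ℝ :=
  ∑ j ∈ Finset.range (l + 1),
    (-1 : ℝ) ^ j / (j.factorial * (l - j).factorial) *
      (Real.Gamma (lam + l + 1) / Real.Gamma (lam + j + 1)) * t ^ j

/-- `f_l(r) = (2^{λ+1} l!/(a^λ Γ(λ+l+1)))^{1/2} r^m L_l^{(λ)}((2/a) r^a) e^{-(1/a) r^a}`,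
indexed by integers, with the convention `f_{-1} = 0`. -/
noncomputable def laguerreFun (ν a : ℝ) (m : ℕ) (l : ℤ) (r : ℝ) : ℂ :=
  if l < 0 then 0 else
  ((Real.sqrt ((2 : ℝ) ^ ((ν + 2 * m) / a + 1) * (l.toNat).factorial /
        (a ^ ((ν + 2 * m) / a) * Real.Gamma ((ν + 2 * m) / a + l.toNat + 1))) *
      r ^ m * laguerre ((ν + 2 * m) / a) l.toNat ((2 / a) * r ^ a) *
      Real.exp (-(1 / a) * r ^ a) : ℝ) : ℂ)

/-!
Write `f_l(r) = c_l r^m h(t)` with `t = (2/a) r^a` and `h(t) = L_l^{(λ)}(t) e^{-t/2}`. In this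
variable `r d/dr = a t d/dt`, so `π(𝐧⁻) f_l = -(i/2) c_l r^m (2t h'' + 2(λ+1+t) h' + (λ+1+t/2) h)`,
and conjugating by `e^{-t/2}` turns this operator into `2(t D² + (λ+1) D)`. On monomials
`t D² + (λ+1) D` sends `t^(j+1)` to `(j+1)(λ+j+1) t^j`, which on the explicit coefficients of the
Laguerre polynomials reads `t L_{l+1}'' + (λ+1) L_{l+1}' = -(λ+l+1) L_l`. Finally the
normalisations satisfy `c_{l+1} (λ+l+1) = √((l+1)(λ+l+1)) c_l`.
-/

open Polynomial

noncomputable def laguerreCoeff (lam : ℝ) (l j : ℕ) : ℝ :=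
  (-1 : ℝ) ^ j / (j.factorial * (l - j).factorial) *
    (Real.Gamma (lam + l + 1) / Real.Gamma (lam + j + 1))

noncomputable def laguerrePoly (lam : ℝ) (l : ℕ) : ℝ[X] :=
  ∑ j ∈ Finset.range (l + 1), monomial j (laguerreCoeff lam l j)

theorem eval_laguerrePoly (lam : ℝ) (l : ℕ) (t : ℝ) :
    (laguerrePoly lam l).eval t = laguerre lam l t := by
  simp [laguerrePoly, laguerre, laguerreCoeff, eval_finsetSum]

noncomputable def laguerreOp (lam : ℝ) : ℝ[X] →ₗ[ℝ] ℝ[X] :=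
  LinearMap.mulLeft ℝ X ∘ₗ derivative ∘ₗ derivative + (lam + 1) • derivative

theorem laguerreOp_apply (lam : ℝ) (p : ℝ[X]) :
    laguerreOp lam p = X * derivative (derivative p) + C (lam + 1) * derivative p := by
  simp [laguerreOp, smul_eq_C_mul]

theorem laguerreOp_monomial_zero (lam c : ℝ) : laguerreOp lam (monomial 0 c) = 0 := by
  simp [laguerreOp_apply]

theorem laguerreOp_monomial_succ (lam c : ℝ) (j : ℕ) :
    laguerreOp lam (monomial (j + 1) c) = monomial j (c * (j + 1) * (lam + j + 1)) := by
  simp only [laguerreOp_apply, ← C_mul_X_pow_eq_monomial, derivative_C_mul_X_pow]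
  cases j with
  | zero => simp [mul_comm]
  | succ i =>
    simp only [Nat.add_sub_cancel]
    push_cast
    simp only [map_add, map_mul, map_natCast, map_one]
    ring

theorem laguerreCoeff_succ_succ {lam : ℝ} (hlam : -1 < lam) (l j : ℕ) :
    laguerreCoeff lam (l + 1) (j + 1) * (j + 1) * (lam + j + 1)
      = -(lam + l + 1) * laguerreCoeff lam l j := by
  have hj : 0 < lam + j + 1 := by linarith [j.cast_nonneg (α := ℝ)]
  have hl : 0 < lam + l + 1 := by linarith [l.cast_nonneg (α := ℝ)]
  simp only [laguerreCoeff, Nat.add_sub_add_right, Nat.factorial_succ]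
  push_cast
  rw [← add_assoc lam (l : ℝ) 1, ← add_assoc lam (j : ℝ) 1, Real.Gamma_add_one hl.ne',
    Real.Gamma_add_one hj.ne']
  have hΓ := (Real.Gamma_pos_of_pos hj).ne'
  field_simp
  ring

theorem laguerreOp_laguerrePoly_zero (lam : ℝ) : laguerreOp lam (laguerrePoly lam 0) = 0 := by
  simp [laguerrePoly, laguerreOp_apply]

theorem laguerreOp_laguerrePoly_succ {lam : ℝ} (hlam : -1 < lam) (l : ℕ) :
    laguerreOp lam (laguerrePoly lam (l + 1)) = -(lam + l + 1) • laguerrePoly lam l := by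
  rw [laguerrePoly, Finset.sum_range_succ', map_add, map_sum, laguerreOp_monomial_zero,
    add_zero, laguerrePoly, Finset.smul_sum]
  refine Finset.sum_congr rfl fun j _ => ?_
  rw [laguerreOp_monomial_succ, laguerreCoeff_succ_succ hlam, smul_monomial, smul_eq_mul]

noncomputable def radialProfile (c a : ℝ) (m : ℕ) (h : ℝ → ℝ) (r : ℝ) : ℝ :=
  r ^ m * h (c * r ^ a)

section RadialProfile

variable {c a : ℝ} {m : ℕ} {h h' h'' : ℝ → ℝ} {r : ℝ}

theorem hasDerivAt_radialProfile (hh : ∀ t, HasDerivAt h (h' t) t) (hr : 0 < r) :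
    HasDerivAt (radialProfile c a m h)
      (radialProfile c a m (fun t => m * h t + a * t * h' t) r / r) r := by
  have hpow : HasDerivAt (fun s => s ^ m) (m * r ^ m / r) r := by
    refine (hasDerivAt_pow m r).congr_deriv ?_
    cases m with
    | zero => simp
    | succ k => field_simp; rw [Nat.add_sub_cancel, pow_succ]
  have hrpow : HasDerivAt (fun s => c * s ^ a) (a * (c * r ^ a) / r) r := by
    refine ((Real.hasDerivAt_rpow_const (p := a) (Or.inl hr.ne')).const_mul c).congr_deriv ?_
    rw [Real.rpow_sub_one hr.ne']
    ring
  refine (hpow.fun_mul ((hh _).comp r hrpow)).congr_deriv ?_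
  simp only [radialProfile, Function.comp_apply]
  ring

theorem deriv_deriv_radialProfile (hh : ∀ t, HasDerivAt h (h' t) t)
    (hh' : ∀ t, HasDerivAt h' (h'' t) t) (hr : 0 < r) :
    r ^ 2 * deriv (deriv (radialProfile c a m h)) r
      = radialProfile c a m (fun t => m * (m - 1) * h t + (2 * m + a - 1) * a * t * h' t
          + a ^ 2 * t ^ 2 * h'' t) r := by
  have hk (t : ℝ) : HasDerivAt (fun t => m * h t + a * t * h' t)
      ((m + a) * h' t + a * t * h'' t) t :=
    (((hh t).const_mul _).add (((hasDerivAt_id' t).const_mul a).mul (hh' t))).congr_deriv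
      (by ring)
  have hD : deriv (radialProfile c a m h) =ᶠ[nhds r]
      fun s => radialProfile c a m (fun t => m * h t + a * t * h' t) s / s := by
    filter_upwards [Ioi_mem_nhds hr] with s hs
    exact (hasDerivAt_radialProfile hh hs).deriv
  rw [hD.deriv_eq, ((hasDerivAt_radialProfile hk hr).fun_div (hasDerivAt_id' r) hr.ne').deriv]
  simp only [radialProfile]
  field_simp
  ring

end RadialProfile

/-- On real-valued functions, `π(𝐧⁻) = -(i/2) · radialLowering ν a m`. -/
noncomputable def radialLowering (ν a : ℝ) (m : ℕ) (F : ℝ → ℝ) (r : ℝ) : ℝ :=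
  (ν + a) / a * F r + 2 / a * r * deriv F r + 1 / a * r ^ a * F r
    + 1 / a * r ^ (-a) * (r ^ 2 * deriv (deriv F) r + (ν + 1) * r * deriv F r - m * (ν + m) * F r)

theorem radialLowering_radialProfile {ν a : ℝ} {m : ℕ} {h h' h'' : ℝ → ℝ} {r : ℝ} (ha : a ≠ 0)
    (hh : ∀ t, HasDerivAt h (h' t) t) (hh' : ∀ t, HasDerivAt h' (h'' t) t) (hr : 0 < r) :
    radialLowering ν a m (radialProfile (2 / a) a m h) r
      = radialProfile (2 / a) a m (fun t => 2 * t * h'' t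
          + 2 * ((ν + 2 * m) / a + 1 + t) * h' t + ((ν + 2 * m) / a + 1 + t / 2) * h t) r := by
  have hD := (hasDerivAt_radialProfile (c := 2 / a) (a := a) (m := m) hh hr).deriv
  have hD2 := deriv_deriv_radialProfile (c := 2 / a) (a := a) (m := m) hh hh' hr
  rw [mul_comm, ← eq_div_iff (by positivity)] at hD2
  have hra : r ^ a ≠ 0 := (Real.rpow_pos_of_pos hr a).ne'
  rw [radialLowering, hD, hD2, Real.rpow_neg hr.le]
  simp only [radialProfile]
  field_simp
  ring

noncomputable def expWeighted (q : ℝ[X]) (t : ℝ) : ℝ :=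
  q.eval t * Real.exp (-t / 2)

theorem hasDerivAt_expWeighted (q : ℝ[X]) (t : ℝ) :
    HasDerivAt (expWeighted q) (expWeighted (derivative q - C (1 / 2) * q) t) t := by
  have hexp : HasDerivAt (fun t => Real.exp (-t / 2)) (Real.exp (-t / 2) * (-1 / 2)) t :=
    ((hasDerivAt_id' t).neg.div_const 2).exp
  refine ((q.hasDerivAt t).mul hexp).congr_deriv ?_
  simp only [expWeighted, eval_sub, eval_mul, eval_C]
  ring

theorem radialLowering_radialProfile_expWeighted {ν a r : ℝ} {m : ℕ} (ha : a ≠ 0) (hr : 0 < r)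
    (q : ℝ[X]) :
    radialLowering ν a m (radialProfile (2 / a) a m (expWeighted q)) r
      = 2 * radialProfile (2 / a) a m (expWeighted (laguerreOp ((ν + 2 * m) / a) q)) r := by
  rw [radialLowering_radialProfile ha (hasDerivAt_expWeighted q) (hasDerivAt_expWeighted _) hr]
  simp only [radialProfile, expWeighted, laguerreOp_apply, eval_add, eval_sub, eval_mul, eval_C,
    eval_X, derivative_sub, derivative_mul, derivative_C, zero_mul, zero_add]
  ring

noncomputable def laguerreNorm (lam a : ℝ) (l : ℕ) : ℝ :=
  Real.sqrt ((2 : ℝ) ^ (lam + 1) * l.factorial / (a ^ lam * Real.Gamma (lam + l + 1)))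

theorem laguerreNorm_succ_mul {lam a : ℝ} (hlam : -1 < lam) (ha : 0 < a) (l : ℕ) :
    laguerreNorm lam a (l + 1) * (lam + l + 1)
      = Real.sqrt ((l + 1) * (lam + l + 1)) * laguerreNorm lam a l := by
  have hl : 0 < lam + l + 1 := by linarith [l.cast_nonneg (α := ℝ)]
  have hΓ := Real.Gamma_pos_of_pos hl
  have hapow := Real.rpow_pos_of_pos ha lam
  have hsq : 0 ≤ ((l : ℝ) + 1) * (lam + l + 1) := by positivity
  rw [laguerreNorm, laguerreNorm, ← Real.sqrt_mul hsq]
  conv_lhs => rw [← Real.sqrt_sq hl.le, ← Real.sqrt_mul' _ (sq_nonneg _)]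
  congr 1
  push_cast
  rw [← add_assoc lam (l : ℝ) 1, Real.Gamma_add_one hl.ne', Nat.factorial_succ]
  push_cast
  field_simp

theorem laguerreFun_natCast (ν a : ℝ) (m l : ℕ) :
    laguerreFun ν a m l = fun r => ((radialProfile (2 / a) a m
      (expWeighted (laguerreNorm ((ν + 2 * m) / a) a l • laguerrePoly ((ν + 2 * m) / a) l)) r
        : ℝ) : ℂ) := by
  funext r
  rw [laguerreFun, if_neg (not_lt.2 (Int.natCast_nonneg l))]
  simp only [Int.toNat_natCast, radialProfile, expWeighted, eval_smul, eval_laguerrePoly,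
    laguerreNorm, smul_eq_mul]
  rw [show -(2 / a * r ^ a) / 2 = -(1 / a) * r ^ a by ring]
  congr 1
  ring

theorem deriv_ofReal_comp (g : ℝ → ℝ) (x : ℝ) : deriv (fun y => (g y : ℂ)) x = deriv g x := by
  by_cases hg : DifferentiableAt ℝ g x
  · exact hg.hasDerivAt.ofReal_comp.deriv
  · have hc : ¬DifferentiableAt ℝ (fun y => (g y : ℂ)) x := fun hc =>
      hg (Complex.reCLM.differentiableAt.comp x hc)
    rw [deriv_zero_of_not_differentiableAt hg, deriv_zero_of_not_differentiableAt hc, ofReal_zero]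

/-- `π(𝐧⁻) f = -(i/2) H_a f - (1/2) E⁺_a f - (1/2) E⁻_{a,m} f`. -/
noncomputable def piLowering (ν a : ℝ) (m : ℕ) (f : ℝ → ℂ) (r : ℝ) : ℂ :=
  -(Complex.I / 2) * ((((ν : ℂ) + a) / a) * f r + 2 / (a : ℂ) * (r : ℂ) * deriv f r)
    - Complex.I / (2 * a) * ((r ^ a : ℝ) : ℂ) * f r
    - Complex.I / (2 * a) * ((r ^ (-a) : ℝ) : ℂ) * ((r : ℂ) ^ 2 * deriv (deriv f) r
        + ((ν : ℂ) + 1) * (r : ℂ) * deriv f r - (m : ℂ) * ((ν : ℂ) + (m : ℂ)) * f r)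

theorem piLowering_ofReal (ν a : ℝ) (m : ℕ) (F : ℝ → ℝ) (r : ℝ) :
    piLowering ν a m (fun s => (F s : ℂ)) r = -(Complex.I / 2) * radialLowering ν a m F r := by
  have hD : deriv (fun s => (F s : ℂ)) = fun s => ((deriv F s : ℝ) : ℂ) :=
    _root_.funext (deriv_ofReal_comp F)
  rw [piLowering, hD, deriv_ofReal_comp, radialLowering]
  push_cast
  ring

/-- The lowering operator `π(𝐧⁻) = -(i/2) H_a - (1/2) E⁺_a - (1/2) E⁻_{a,m}` sends
`f_l` to `i √(l(λ+l)) f_{l-1}`, where `λ = (ν + 2m)/a` and `f_{-1} = 0`. -/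
theorem laguerreFun_lowering (ν a : ℝ) (ha : 0 < a) (m : ℕ)
    (hlam : -1 < (ν + 2 * m) / a) (l : ℕ) (r : ℝ) (hr : 0 < r) :
    -(Complex.I / 2) *
        ((((ν : ℂ) + a) / a) * laguerreFun ν a m l r +
          2 / (a : ℂ) * (r : ℂ) * deriv (laguerreFun ν a m l) r) -
      Complex.I / (2 * a) * ((r ^ a : ℝ) : ℂ) * laguerreFun ν a m l r -
      Complex.I / (2 * a) * ((r ^ (-a) : ℝ) : ℂ) *
        ((r : ℂ) ^ 2 * deriv (deriv (laguerreFun ν a m l)) r +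
          ((ν : ℂ) + 1) * (r : ℂ) * deriv (laguerreFun ν a m l) r -
          (m : ℂ) * ((ν : ℂ) + (m : ℂ)) * laguerreFun ν a m l r)
      = Complex.I *
          (Real.sqrt (l * ((ν + 2 * m) / a + l)) : ℝ) *
          laguerreFun ν a m ((l : ℤ) - 1) r := by
  change piLowering ν a m (laguerreFun ν a m l) r = _
  rw [laguerreFun_natCast, piLowering_ofReal, radialLowering_radialProfile_expWeighted ha.ne' hr,
    map_smul]
  cases l with
  | zero => simp [laguerreOp_laguerrePoly_zero, laguerreFun, radialProfile, expWeighted]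
  | succ l =>
    have hnorm := congrArg ((↑) : ℝ → ℂ) (laguerreNorm_succ_mul hlam ha l)
    rw [laguerreOp_laguerrePoly_succ hlam, smul_smul,
      show ((l + 1 : ℕ) : ℤ) - 1 = l by push_cast; ring, laguerreFun_natCast, Nat.cast_succ,
      ← add_assoc]
    simp only [radialProfile, expWeighted, eval_smul, smul_eq_mul]
    push_cast at hnorm ⊢
    linear_combination (Complex.I * (r : ℂ) ^ m
      * ((eval (2 / a * r ^ a) (laguerrePoly ((ν + 2 * m) / a) l) : ℝ) : ℂ)
      * Complex.exp (-(2 / a * ((r ^ a : ℝ) : ℂ)) / 2)) * hnorm
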